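/- arXiv:math/0502359 — 10 statements merged into one kernel-verified Lean document; each statement's English description precedes it below -/
import Mathlib

section
/- Let p be a prime, P a finite p-group, and Q a normal subgroup of P. If α is an automorphism of P whose order is coprime to p, and α restricts to the identity on Q and induces the identity on the quotient P/Q, then α is the identity automorphism of P. -/
/-!
Put `h := α x * x⁻¹ ∈ Q`. Since `α` fixes `h`, induction gives `αⁿ x = hⁿ x`; taking `n` to be the
order of `α` yields `hⁿ = 1`. As `n` is coprime to `p`, the `n`-th power map is a bijection of the
`p`-group `P`, so `h = 1`, i.e. `α x = x`.
-/

theorem MulAut.pow_apply_eq_of_apply_mul_inv_fixed {G : Type*} [Group G] (α : MulAut G) (x : G)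
    (hfix : α (α x * x⁻¹) = α x * x⁻¹) (n : ℕ) : (α ^ n) x = (α x * x⁻¹) ^ n * x := by
  induction n with
  | zero => simp
  | succ n ih =>
    rw [pow_succ', MulAut.mul_apply, ih, map_mul, map_pow, hfix, pow_succ, mul_assoc,
      inv_mul_cancel_right]

theorem IsPGroup.eq_one_of_pow_eq_one {p : ℕ} {G : Type*} [Group G] (hG : IsPGroup p G) {n : ℕ}
    (hn : p.Coprime n) {g : G} (hg : g ^ n = 1) : g = 1 :=
  (hG.powEquiv hn).injective (by simp [hG.powEquiv_apply, hg])

theorem stmt0_general {p : ℕ} {P : Type*} [Group P]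
    (hP : IsPGroup p P) (Q : Subgroup P)
    (α : MulAut P) (hord : Nat.Coprime (orderOf α) p)
    (hfix : ∀ q ∈ Q, α q = q) (hquot : ∀ x : P, α x * x⁻¹ ∈ Q) :
    α = 1 := by
  ext x
  have hpow := α.pow_apply_eq_of_apply_mul_inv_fixed x (hfix _ (hquot x)) (orderOf α)
  rw [pow_orderOf_eq_one, MulAut.one_apply, right_eq_mul] at hpow
  have hx : α x * x⁻¹ = 1 := hP.eq_one_of_pow_eq_one hord.symm hpow
  simpa [mul_inv_eq_one] using hx

/-- If `α` is an automorphism of a finite `p`-group `P` of order coprime to `p`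
which restricts to the identity on a normal subgroup `Q` and induces the identity
on `P/Q`, then `α` is the identity. -/
theorem stmt0 {p : ℕ} (hp : p.Prime) {P : Type*} [Group P] [Finite P]
    (hP : IsPGroup p P) (Q : Subgroup P) (hQn : Q.Normal)
    (α : MulAut P) (hord : Nat.Coprime (orderOf α) p)
    (hfix : ∀ q ∈ Q, α q = q) (hquot : ∀ x : P, α x * x⁻¹ ∈ Q) :
    α = 1 :=
  stmt0_general hP Q α hord hfix hquot
end

section
/- Let p be a prime, P a finite p-group, and Q a normal subgroup of P. Then the set of automorphisms of P which restrict to the identity on Q and induce the identity on P/Q forms a subgroup of Aut(P) which is a p-group. -/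
/-!
An automorphism `α` fixing `Q` pointwise and acting trivially on `P/Q` moves each `x` by a
fixed element `c = α x * x⁻¹ ∈ Q`, so `α ^ n x = c ^ n * x`. Hence the exponent of the group of
such automorphisms divides the exponent of `Q`, which is a power of `p`.
-/

namespace Subgroup

variable {P : Type*} [Group P] (Q : Subgroup P)

/-- The stabilizer in `Aut(P)` of the series `1 ≤ Q ≤ P`. -/
def stabilizingAut : Subgroup (MulAut P) where
  carrier := {α | (∀ q ∈ Q, α q = q) ∧ ∀ x : P, α x * x⁻¹ ∈ Q}
  one_mem' := ⟨fun _ _ => rfl, fun x => by simp [Q.one_mem]⟩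
  mul_mem' := by
    rintro α β ⟨hα, hα'⟩ ⟨hβ, hβ'⟩
    refine ⟨fun q hq => by simp [MulAut.mul_apply, hβ q hq, hα q hq], fun x => ?_⟩
    have : α (β x) * x⁻¹ = (α (β x) * (β x)⁻¹) * (β x * x⁻¹) := by group
    exact this ▸ mul_mem (hα' (β x)) (hβ' x)
  inv_mem' := by
    rintro α ⟨hα, hα'⟩
    refine ⟨fun q hq => α.symm_apply_eq.mpr (hα q hq).symm, fun x => ?_⟩
    have : α⁻¹ x * x⁻¹ = (α (α⁻¹ x) * (α⁻¹ x)⁻¹)⁻¹ := by simp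
    exact this ▸ inv_mem (hα' (α⁻¹ x))

variable {Q}

theorem mem_stabilizingAut {α : MulAut P} :
    α ∈ Q.stabilizingAut ↔ (∀ q ∈ Q, α q = q) ∧ ∀ x : P, α x * x⁻¹ ∈ Q :=
  Iff.rfl

theorem stabilizingAut_pow_apply {α : MulAut P} (hα : α ∈ Q.stabilizingAut) (x : P) (n : ℕ) :
    (α ^ n) x = (α x * x⁻¹) ^ n * x := by
  induction n with
  | zero => simp
  | succ n ih =>
    rw [pow_succ', MulAut.mul_apply, ih, map_mul, map_pow, hα.1 _ (hα.2 x), pow_succ, mul_assoc,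
      inv_mul_cancel_right]

theorem exponent_stabilizingAut_dvd : Monoid.exponent Q.stabilizingAut ∣ Monoid.exponent Q := by
  refine Monoid.exponent_dvd_iff_forall_pow_eq_one.mpr fun ⟨α, hα⟩ => ?_
  ext x
  have hc : (α x * x⁻¹) ^ Monoid.exponent Q = 1 := by
    simpa using congrArg Subtype.val (Monoid.pow_exponent_eq_one (⟨_, hα.2 x⟩ : Q))
  simp [stabilizingAut_pow_apply hα, hc]

end Subgroup

theorem stmt1_general {p : ℕ} {P : Type*} [Group P] [Finite P]
    (hP : IsPGroup p P) (Q : Subgroup P) :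
    ∃ H : Subgroup (MulAut P),
      (∀ α : MulAut P, α ∈ H ↔ ((∀ q ∈ Q, α q = q) ∧ ∀ x : P, α x * x⁻¹ ∈ Q))
      ∧ IsPGroup p H := by
  obtain ⟨n, hn⟩ := hP.exists_exponent_dvd_pow
  refine ⟨Q.stabilizingAut, fun _ => Subgroup.mem_stabilizingAut, ?_⟩
  exact IsPGroup.of_exponent_dvd_pow <|
    Subgroup.exponent_stabilizingAut_dvd.trans ((Monoid.exponent_submonoid_dvd Q.toSubmonoid).trans hn)

/-- The automorphisms of a finite `p`-group `P` restricting to the identity on a normal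
subgroup `Q` and inducing the identity on `P/Q` form a subgroup of `Aut(P)` which is a
`p`-group. -/
theorem stmt1 {p : ℕ} (hp : p.Prime) {P : Type*} [Group P] [Finite P]
    (hP : IsPGroup p P) (Q : Subgroup P) (hQn : Q.Normal) :
    ∃ H : Subgroup (MulAut P),
      (∀ α : MulAut P, α ∈ H ↔ ((∀ q ∈ Q, α q = q) ∧ ∀ x : P, α x * x⁻¹ ∈ Q))
      ∧ IsPGroup p H :=
  stmt1_general hP Q
end

section
/- Let G be a finite group and p a prime. Then any two Sylow p-subgroups of G are conjugate by an element of O^p(G): for all S, S' ∈ Syl_p(G) there exists g ∈ O^p(G) with gSg⁻¹ = S'. -/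
/-!
The subgroups `N ⊴ G` with `G ⧸ N` a `p`-group are closed under finite intersections, so in a
finite group `O^p(G)` is itself one of them. A Sylow `p`-subgroup `S` then maps onto the
`p`-group `G ⧸ O^p(G)`, whence `G = O^p(G) S`. Writing a conjugating element from Sylow's
theorem as `n s` with `n ∈ O^p(G)` and `s ∈ S`, the factor `s` normalises `S`, so `n` alone
conjugates `S` to `S'`.
-/

/-- `O^p(G)`: the smallest normal subgroup of `G` whose quotient is a `p`-group. -/
def pResidual (p : ℕ) (G : Type*) [Group G] : Subgroup G :=
  sInf {N : Subgroup G | N.Normal ∧ ∀ g : G, ∃ k : ℕ, g ^ p ^ k ∈ N}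

instance pResidual_normal (p : ℕ) (G : Type*) [Group G] : (pResidual p G).Normal := by
  rw [pResidual, sInf_eq_iInf']
  exact Subgroup.normal_iInf_normal fun N ↦ N.2.1

namespace Sylow

variable {p : ℕ} [Fact p.Prime] {G : Type*} [Group G] [Finite G]

theorem sup_eq_top_of_isPGroup_quotient (P : Sylow p G) {N : Subgroup G} [N.Normal]
    (hN : IsPGroup p (G ⧸ N)) : N ⊔ P = ⊤ := by
  have hmap : (P : Subgroup G).map (QuotientGroup.mk' N) = ⊤ :=
    ((P.mapSurjective (QuotientGroup.mk'_surjective N)).3 (hN.to_subgroup ⊤) le_top).symm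
  rw [sup_comm, ← QuotientGroup.ker_mk' N, ← Subgroup.comap_map_eq, hmap, Subgroup.comap_top]

theorem exists_mem_smul_eq_of_sup_eq_top {N : Subgroup G} [N.Normal] (P Q : Sylow p G)
    (hNP : N ⊔ P = ⊤) : ∃ n ∈ N, n • P = Q := by
  obtain ⟨g, hg⟩ := MulAction.exists_smul_eq G P Q
  obtain ⟨n, hn, s, hs, rfl⟩ := Subgroup.mem_sup_of_normal_left.mp (hNP ▸ Subgroup.mem_top g)
  have hsP : s • P = P := smul_eq_iff_mem_normalizer.mpr (Subgroup.le_normalizer hs)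
  exact ⟨n, hn, by rw [← hg, mul_smul, hsP]⟩

theorem exists_mem_smul_eq_of_isPGroup_quotient {N : Subgroup G} [N.Normal]
    (hN : IsPGroup p (G ⧸ N)) (P Q : Sylow p G) : ∃ n ∈ N, n • P = Q :=
  exists_mem_smul_eq_of_sup_eq_top P Q (P.sup_eq_top_of_isPGroup_quotient hN)

end Sylow

section pResidual

variable {p : ℕ} {G : Type*} [Group G]

theorem infClosed_setOf_normal_and_pow_mem :
    InfClosed {N : Subgroup G | N.Normal ∧ ∀ g : G, ∃ k : ℕ, g ^ p ^ k ∈ N} := by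
  rintro N ⟨hN, hNpow⟩ M ⟨hM, hMpow⟩
  refine ⟨Subgroup.normal_inf_normal N M, fun g ↦ ?_⟩
  obtain ⟨k, hk⟩ := hNpow g
  obtain ⟨l, hl⟩ := hMpow g
  have pow_max_mem {H : Subgroup G} {i : ℕ} (hi : i ≤ max k l) (h : g ^ p ^ i ∈ H) :
      g ^ p ^ max k l ∈ H := by
    rw [← Nat.pow_sub_mul_pow p hi, mul_comm, pow_mul]
    exact H.pow_mem h _
  exact ⟨max k l, pow_max_mem (le_max_left k l) hk, pow_max_mem (le_max_right k l) hl⟩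

variable [Finite G]

theorem exists_pow_pow_mem_pResidual (g : G) : ∃ k : ℕ, g ^ p ^ k ∈ pResidual p G := by
  have : Finite (Subgroup G) := Finite.of_injective _ SetLike.coe_injective
  have htop : ⊤ ∈ {N : Subgroup G | N.Normal ∧ ∀ g : G, ∃ k : ℕ, g ^ p ^ k ∈ N} :=
    ⟨Subgroup.normal_top, fun g ↦ ⟨0, Subgroup.mem_top _⟩⟩
  exact (infClosed_setOf_normal_and_pow_mem.sInf_mem (Set.toFinite _) htop subset_rfl).2 g

theorem isPGroup_quotient_pResidual : IsPGroup p (G ⧸ pResidual p G) := by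
  rintro ⟨g⟩
  obtain ⟨k, hk⟩ := exists_pow_pow_mem_pResidual (p := p) g
  exact ⟨k, (QuotientGroup.eq_one_iff _).mpr hk⟩

end pResidual

/-- Any two Sylow `p`-subgroups of a finite group `G` are conjugate by an element
of `O^p(G)`. -/
theorem stmt3 {p : ℕ} (hp : p.Prime) {G : Type*} [Group G] [Finite G] (S S' : Sylow p G) :
    ∃ g ∈ pResidual p G,
      (S : Subgroup G).map (MulAut.conj g).toMonoidHom = (S' : Subgroup G) := by
  have : Fact p.Prime := ⟨hp⟩
  obtain ⟨g, hg, hgS⟩ :=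
    Sylow.exists_mem_smul_eq_of_isPGroup_quotient isPGroup_quotient_pResidual S S'
  exact ⟨g, hg, congrArg Sylow.toSubgroup hgS⟩
end

section
/- Focal subgroup theorem: Let G be a finite group, p a prime, and S ∈ Syl_p(G). Then S ∩ [G,G] is generated by all elements of the form x⁻¹y where x, y ∈ S are conjugate in G: S ∩ [G,G] = ⟨ x⁻¹·(g x g⁻¹) : x ∈ S, g ∈ G, g x g⁻¹ ∈ S ⟩. -/
/-!
Let `F` be the focal subgroup of `H ≤ G`. Since `[H, H] ≤ F`, the quotient `H ⧸ F` is abelian and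
the transfer `V : G → H ⧸ F` is defined. On `g ∈ H` it is the power map `g ↦ g ^ |G : H|`, because
every conjugate of a power `g ^ k` lying in `H` agrees with `g ^ k` modulo `F`. As `V` kills
`[G, G]`, each `g ∈ H ⊓ [G, G]` has `g ^ |G : H| ∈ F`. For a Sylow `p`-subgroup `H`, `H ⧸ F` is a
`p`-group and `|G : H|` is prime to `p`, so raising to that power is injective on it and `g ∈ F`.
-/

open Subgroup
open scoped commutatorElement

theorem IsPGroup.mem_of_pow_mem {p : ℕ} {P : Type*} [Group P] (hP : IsPGroup p P)
    {K : Subgroup P} [K.Normal] {n : ℕ} (hn : p.Coprime n) {x : P} (hx : x ^ n ∈ K) : x ∈ K := by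
  rw [← QuotientGroup.eq_one_iff] at hx ⊢
  apply ((hP.to_quotient K).powEquiv hn).injective
  simpa using hx

theorem MonoidHom.transfer_eq_pow_of_map_conj_pow {G : Type*} [Group G] {H : Subgroup G}
    {A : Type*} [CommGroup A] (ϕ : H →* A) [H.FiniteIndex] {g : G} (hg : g ∈ H)
    (hϕ : ∀ (k : ℕ) (g₀ : G) (h : g₀⁻¹ * g ^ k * g₀ ∈ H),
      ϕ ⟨g₀⁻¹ * g ^ k * g₀, h⟩ = ϕ ⟨g, hg⟩ ^ k) :
    transfer ϕ g = ϕ ⟨g, hg⟩ ^ H.index := by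
  classical
  let := H.fintypeQuotientOfFiniteIndex
  rw [transfer_eq_prod_quotient_orbitRel_zpowers_quot, Finset.prod_congr rfl fun _ _ => hϕ _ _ _,
    Finset.prod_pow_eq_pow_sum, index_eq_sum_minimalPeriod]

namespace Subgroup

variable {G : Type*} [Group G]

def focal (H : Subgroup G) : Subgroup G :=
  closure {y : G | ∃ x ∈ H, ∃ g : G, g * x * g⁻¹ ∈ H ∧ y = x⁻¹ * (g * x * g⁻¹)}

variable {H : Subgroup G}

theorem conj_inv_mul_mem_focal {x g : G} (hx : x ∈ H) (hgx : g * x * g⁻¹ ∈ H) :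
    x⁻¹ * (g * x * g⁻¹) ∈ H.focal :=
  subset_closure ⟨x, hx, g, hgx, rfl⟩

theorem focal_le_inf_commutator (H : Subgroup G) : H.focal ≤ H ⊓ _root_.commutator G := by
  refine closure_le _ |>.2 ?_
  rintro _ ⟨x, hx, g, hgx, rfl⟩
  refine mem_inf.mpr ⟨mul_mem (inv_mem hx) hgx, ?_⟩
  rw [show x⁻¹ * (g * x * g⁻¹) = ⁅x⁻¹, g⁆ by group]
  exact commutator_mem_commutator (mem_top _) (mem_top _)

theorem conj_mem_of_mem {s x : G} (hs : s ∈ H) (hx : x ∈ H) : s * x * s⁻¹ ∈ H :=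
  mul_mem (mul_mem hs hx) (inv_mem hs)

theorem conj_mem_focal {s f : G} (hs : s ∈ H) (hf : f ∈ H.focal) : s * f * s⁻¹ ∈ H.focal := by
  suffices H.focal.map (MulAut.conj s).toMonoidHom ≤ H.focal from this ⟨f, hf, rfl⟩
  refine (MonoidHom.map_closure _ _).trans_le ((closure_le _).2 ?_)
  rintro _ ⟨_, ⟨x, hx, g, hgx, rfl⟩, rfl⟩
  have hconj : (s * g * s⁻¹) * (s * x * s⁻¹) * (s * g * s⁻¹)⁻¹ = s * (g * x * g⁻¹) * s⁻¹ := by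
    group
  have := conj_inv_mul_mem_focal (conj_mem_of_mem hs hx) (hconj ▸ conj_mem_of_mem hs hgx)
  rw [hconj] at this
  simpa [mul_assoc] using this

instance focal_subgroupOf_normal : (H.focal.subgroupOf H).Normal :=
  ⟨fun _ hf s => mem_subgroupOf.mpr (conj_mem_focal s.2 (mem_subgroupOf.mp hf))⟩

theorem commutator_le_focal_subgroupOf : _root_.commutator H ≤ H.focal.subgroupOf H := by
  rw [commutator_eq_closure, closure_le]
  rintro _ ⟨x, y, rfl⟩
  have h := conj_inv_mul_mem_focal (g := (y : G)) (H.inv_mem x.2)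
    (conj_mem_of_mem y.2 (H.inv_mem x.2))
  rw [inv_inv] at h
  simpa [mem_subgroupOf, commutatorElement_def, mul_assoc] using h

instance : IsMulCommutative (H ⧸ H.focal.subgroupOf H) :=
  Normal.quotient_commutative_iff_commutator_le.mpr commutator_le_focal_subgroupOf

open scoped IsMulCommutative in
theorem transfer_mk'_focal [H.FiniteIndex] {g : G} (hg : g ∈ H) :
    (QuotientGroup.mk' (H.focal.subgroupOf H)).transfer g =
      QuotientGroup.mk' (H.focal.subgroupOf H) ⟨g, hg⟩ ^ H.index := by
  refine MonoidHom.transfer_eq_pow_of_map_conj_pow _ hg fun k g₀ h => ?_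
  rw [eq_comm, ← map_pow, QuotientGroup.mk'_apply, QuotientGroup.mk'_apply, QuotientGroup.eq,
    mem_subgroupOf]
  have := conj_inv_mul_mem_focal (g := g₀⁻¹) (pow_mem hg k) (by simpa using h)
  simpa [mul_assoc] using this

open scoped IsMulCommutative in
theorem pow_index_mem_focal [H.FiniteIndex] {g : G} (hg : g ∈ H ⊓ _root_.commutator G) :
    g ^ H.index ∈ H.focal := by
  have h := Abelianization.commutator_subset_ker
    (QuotientGroup.mk' (H.focal.subgroupOf H)).transfer (mem_inf.mp hg).2
  rw [MonoidHom.mem_ker, transfer_mk'_focal (mem_inf.mp hg).1, ← map_pow,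
    QuotientGroup.mk'_apply, QuotientGroup.eq_one_iff, mem_subgroupOf] at h
  simpa using h

end Subgroup

/-- Focal subgroup theorem: for `S ∈ Syl_p(G)`, `S ∩ [G,G]` is generated by the elements
`x⁻¹ · (g x g⁻¹)` with `x ∈ S`, `g ∈ G` and `g x g⁻¹ ∈ S`. -/
theorem stmt8 {p : ℕ} (hp : p.Prime) {G : Type*} [Group G] [Finite G] (S : Sylow p G) :
    (S : Subgroup G) ⊓ commutator G
      = Subgroup.closure {y : G | ∃ x ∈ (S : Subgroup G), ∃ g : G,
          g * x * g⁻¹ ∈ (S : Subgroup G) ∧ y = x⁻¹ * (g * x * g⁻¹)} := by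
  have : Fact p.Prime := ⟨hp⟩
  refine le_antisymm (fun s hs => ?_) (S : Subgroup G).focal_le_inf_commutator
  have hcop : p.Coprime (S : Subgroup G).index := hp.coprime_iff_not_dvd.mpr S.not_dvd_index
  have hpow : (⟨s, (mem_inf.mp hs).1⟩ : (S : Subgroup G)) ^ (S : Subgroup G).index ∈
      (S : Subgroup G).focal.subgroupOf S := by
    simpa [mem_subgroupOf] using pow_index_mem_focal hs
  exact mem_subgroupOf.mp (S.isPGroup'.mem_of_pow_mem hcop hpow)
end

section
/- Let G be a finite group and p a prime. If A is a Sylow p-subgroup of G which is contained in the center Z(G), then G is the internal direct product of A and O^p(G); in particular A ∩ O^p(G) = 1, G = A·O^p(G), and O^p(G) is a normal p-complement. -/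
theorem Subgroup.mem_of_pow_mem_of_coprime {G : Type*} [Group G] {H : Subgroup G} {g : G}
    {k : ℕ} (hk : g ^ k ∈ H) (hco : k.Coprime (orderOf g)) : g ∈ H :=
  Subgroup.zpowers_le.mpr hk (mem_zpowers_pow_iff.mpr hco)

section pResidual

variable {p : ℕ} {G : Type*} [Group G]

theorem pResidual_le_of_index_eq_pow {N : Subgroup G} [N.Normal] {n : ℕ}
    (hN : N.index = p ^ n) : pResidual p G ≤ N :=
  sInf_le ⟨inferInstance, fun g => ⟨n, hN ▸ N.pow_index_mem g⟩⟩

theorem mem_pResidual_of_coprime_orderOf {g : G} (hg : p.Coprime (orderOf g)) :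
    g ∈ pResidual p G :=
  Subgroup.mem_sInf.mpr fun _ ⟨_, hpow⟩ =>
    let ⟨k, hk⟩ := hpow g
    Subgroup.mem_of_pow_mem_of_coprime hk (hg.pow_left k)

theorem le_pResidual_of_coprime_card {H : Subgroup G} [Finite H] (hH : p.Coprime (Nat.card H)) :
    H ≤ pResidual p G := fun _ hg =>
  mem_pResidual_of_coprime_orderOf (hH.coprime_dvd_right (Subgroup.orderOf_dvd_natCard H hg))

theorem Sylow.coprime_index [Fact p.Prime] [Finite G] (P : Sylow p G) :
    p.Coprime (P : Subgroup G).index :=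
  (Nat.Prime.coprime_iff_not_dvd Fact.out).mpr P.not_dvd_index

theorem pResidual_eq_of_isComplement' [Fact p.Prime] [Finite G] {P : Sylow p G}
    {N : Subgroup G} [N.Normal] (h : N.IsComplement' P) : pResidual p G = N := by
  obtain ⟨n, hn⟩ := IsPGroup.iff_card.mp P.2
  refine le_antisymm (pResidual_le_of_index_eq_pow (h.symm.index_eq_card.trans hn)) ?_
  exact le_pResidual_of_coprime_card (h.index_eq_card ▸ P.coprime_index)

end pResidual

/-- If a Sylow `p`-subgroup `A` of a finite group `G` is central, then `G` is the internal
direct product of `A` and `O^p(G)`: `A ∩ O^p(G) = 1`, `G = A · O^p(G)`, and `O^p(G)` is a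
normal `p`-complement (its order is coprime to `p`). -/
theorem stmt9 {p : ℕ} (hp : p.Prime) {G : Type*} [Group G] [Finite G]
    (A : Sylow p G) (hA : (A : Subgroup G) ≤ Subgroup.center G) :
    (A : Subgroup G) ⊓ pResidual p G = ⊥
    ∧ (∀ g : G, ∃ a ∈ (A : Subgroup G), ∃ n ∈ pResidual p G, g = a * n)
    ∧ Nat.Coprime (Nat.card ↥(pResidual p G)) p := by
  have : Fact p.Prime := ⟨hp⟩
  have hNC : Subgroup.normalizer (A : Set G) ≤ Subgroup.centralizer (A : Set G) :=
    le_top.trans (Subgroup.centralizer_eq_top_iff_subset.mpr hA).ge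
  have hK := MonoidHom.ker_transferSylow_isComplement' A hNC
  rw [pResidual_eq_of_isComplement' hK]
  refine ⟨disjoint_iff.mp hK.symm.disjoint, fun g => ?_, ?_⟩
  · obtain ⟨⟨a, n⟩, hg, -⟩ := hK.symm.existsUnique g
    exact ⟨a, a.2, n, n.2, hg.symm⟩
  · exact (hK.index_eq_card ▸ A.coprime_index).symm
end

section
/- Let G be a finite group, p a prime, S ∈ Syl_p(G), and P ≤ S. Then the following are equivalent: (1) for every g ∈ G with gPg⁻¹ ≤ S, one has C_S(gPg⁻¹) = Z(gPg⁻¹); (2) Z(P) is a Sylow p-subgroup of C_G(P) (i.e., P is p-centric in G). -/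
/-- The conjugate subgroup `g P g⁻¹`. -/
def conjBy {G : Type*} [Group G] (g : G) (P : Subgroup G) : Subgroup G :=
  P.map (MulAut.conj g).toMonoidHom

/-!
A `p`-subgroup `R` of `C_G(P)` normalizes `P`, so `PR` is a `p`-group and some conjugate `g(PR)g⁻¹`
lies in `S`; by (1) this forces `gRg⁻¹ ≤ C_S(gPg⁻¹) = Z(gPg⁻¹)`, i.e. `R ≤ P`. Conversely, if every
`p`-subgroup of `C_G(P)` lies in `P`, conjugating the `p`-group `C_S(gPg⁻¹)` back by `g⁻¹` gives (1).
And "every `p`-subgroup of `C_G(P)` lies in `P`" is equivalent to (2), because `Z(P)` is central in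
`C_G(P)` and a `p`-subgroup centralizing a Sylow subgroup lies in it.
-/

open Pointwise Subgroup

section Conjugation

variable {G : Type*} [Group G]

lemma conjBy_eq_smul (g : G) (P : Subgroup G) : conjBy g P = MulAut.conj g • P := rfl

lemma conjBy_le_conjBy_iff {g : G} {A B : Subgroup G} : conjBy g A ≤ conjBy g B ↔ A ≤ B := by
  rw [conjBy_eq_smul, conjBy_eq_smul]
  exact pointwise_smul_le_pointwise_smul_iff

lemma conjBy_le_iff {g : G} {A B : Subgroup G} : conjBy g A ≤ B ↔ A ≤ conjBy g⁻¹ B := by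
  rw [conjBy_eq_smul, conjBy_eq_smul, map_inv]
  exact pointwise_smul_subset_iff

lemma conjBy_inv_conjBy (g : G) (P : Subgroup G) : conjBy g⁻¹ (conjBy g P) = P := by
  rw [conjBy_eq_smul, conjBy_eq_smul, map_inv, inv_smul_smul]

lemma conjBy_centralizer_le (g : G) (P : Subgroup G) :
    conjBy g (centralizer (P : Set G)) ≤ centralizer (conjBy g P : Set G) := by
  rw [conjBy, conjBy, coe_map]
  exact map_centralizer_le_centralizer_image _ _

end Conjugation

section Centric

variable {p : ℕ} {G : Type*} [Group G]

theorem IsPGroup.le_sylow_of_le_centralizer {R : Subgroup G} (hR : IsPGroup p R) (Q : Sylow p G)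
    (hRQ : R ≤ centralizer (Q : Set G)) : R ≤ Q := by
  have hRN : R ≤ normalizer (Q : Subgroup G) := hRQ.trans (centralizer_le_normalizer _)
  rw [← inf_eq_left, ← hR.inf_normalizer_sylow Q, inf_eq_left]
  exact hRN

theorem IsPGroup.exists_sylow_centralizer_eq_iff {P : Subgroup G} (hP : IsPGroup p P) :
    (∃ T : Sylow p (centralizer (P : Set G)),
        (T : Subgroup (centralizer (P : Set G)))
          = (P ⊓ centralizer (P : Set G)).subgroupOf (centralizer (P : Set G)))
      ↔ ∀ R : Subgroup G, IsPGroup p R → R ≤ centralizer (P : Set G) → R ≤ P := by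
  constructor
  · rintro ⟨T, hT⟩ R hR hRC x hx
    have hRT : R.subgroupOf (centralizer (P : Set G)) ≤ T := by
      refine hR.comap_subtype.le_sylow_of_le_centralizer T fun c _ z hz ↦ ?_
      have hzP : z ∈ (T : Subgroup (centralizer (P : Set G))) := hz
      rw [hT, mem_subgroupOf] at hzP
      exact Subtype.ext (c.2 _ hzP.1)
    have hxT := hRT (show (⟨x, hRC hx⟩ : centralizer (P : Set G)) ∈ _ from hx)
    rw [hT, mem_subgroupOf] at hxT
    exact hxT.1
  · intro h
    obtain ⟨T, hT⟩ := (hP.to_le inf_le_left).comap_subtype.exists_le_sylow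
    refine ⟨T, le_antisymm (fun x hx ↦ ?_) hT⟩
    exact ⟨h _ (T.isPGroup'.map _) (map_subtype_le _) ⟨x, hx, rfl⟩, x.2⟩

theorem le_of_isPGroup_of_le_centralizer [Fact p.Prime] [Finite (Sylow p G)] (S : Sylow p G)
    {P : Subgroup G} (hP : IsPGroup p P)
    (hS : ∀ g : G, conjBy g P ≤ S →
      (S : Subgroup G) ⊓ centralizer (conjBy g P : Set G)
        = conjBy g P ⊓ centralizer (conjBy g P : Set G))
    {R : Subgroup G} (hR : IsPGroup p R) (hRC : R ≤ centralizer (P : Set G)) : R ≤ P := by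
  have hPR : IsPGroup p (P ⊔ R : Subgroup G) :=
    hP.to_sup_of_normal_left' hR (hRC.trans (centralizer_le_normalizer _))
  obtain ⟨T, hPRT⟩ := hPR.exists_le_sylow
  obtain ⟨g, hgT⟩ := MulAction.exists_smul_eq G T S
  have hPRS : conjBy g (P ⊔ R) ≤ S := by
    rw [← hgT, Sylow.coe_subgroup_smul, ← conjBy_eq_smul]
    exact conjBy_le_conjBy_iff.mpr hPRT
  have hgR : conjBy g R ≤ (S : Subgroup G) ⊓ centralizer (conjBy g P : Set G) :=
    le_inf ((conjBy_le_conjBy_iff.mpr le_sup_right).trans hPRS)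
      ((conjBy_le_conjBy_iff.mpr hRC).trans (conjBy_centralizer_le g P))
  rw [hS g ((conjBy_le_conjBy_iff.mpr le_sup_left).trans hPRS)] at hgR
  exact conjBy_le_conjBy_iff.mp (hgR.trans inf_le_left)

theorem inf_centralizer_conjBy_eq {P S : Subgroup G} (hS : IsPGroup p S)
    (hP : ∀ R : Subgroup G, IsPGroup p R → R ≤ centralizer (P : Set G) → R ≤ P)
    {g : G} (hgP : conjBy g P ≤ S) :
    S ⊓ centralizer (conjBy g P : Set G) = conjBy g P ⊓ centralizer (conjBy g P : Set G) := by
  refine le_antisymm (le_inf ?_ inf_le_right) (inf_le_inf_right _ hgP)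
  have hC : conjBy g⁻¹ (S ⊓ centralizer (conjBy g P : Set G)) ≤ centralizer (P : Set G) := by
    refine (conjBy_le_conjBy_iff.mpr inf_le_right).trans ?_
    simpa only [conjBy_inv_conjBy] using conjBy_centralizer_le g⁻¹ (conjBy g P)
  simpa only [inv_inv] using conjBy_le_iff.mp (hP _ ((hS.to_le inf_le_left).map _) hC)

end Centric

/-- For `P ≤ S ∈ Syl_p(G)`: every `G`-conjugate of `P` contained in `S` satisfies
`C_S(gPg⁻¹) = Z(gPg⁻¹)` if and only if `Z(P)` is a Sylow `p`-subgroup of `C_G(P)`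
(`P` is `p`-centric in `G`). -/
theorem stmt10 {p : ℕ} (hp : p.Prime) {G : Type*} [Group G] [Finite G]
    (S : Sylow p G) (P : Subgroup G) (hP : P ≤ S) :
    (∀ g : G, conjBy g P ≤ (S : Subgroup G) →
        (S : Subgroup G) ⊓ Subgroup.centralizer ((conjBy g P : Subgroup G) : Set G)
          = conjBy g P ⊓ Subgroup.centralizer ((conjBy g P : Subgroup G) : Set G))
    ↔ ∃ T : Sylow p ↥(Subgroup.centralizer (P : Set G)),
        (T : Subgroup ↥(Subgroup.centralizer (P : Set G)))
          = (P ⊓ Subgroup.centralizer (P : Set G)).subgroupOf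
              (Subgroup.centralizer (P : Set G)) := by
  have := Fact.mk hp
  have hPp : IsPGroup p P := S.isPGroup'.to_le hP
  rw [hPp.exists_sylow_centralizer_eq_iff]
  exact ⟨fun h _ ↦ le_of_isPGroup_of_le_centralizer S hPp h,
    fun h _ ↦ inf_centralizer_conjBy_eq S.isPGroup' h⟩
end

section
/- Let G be a finite group, p a prime, S ∈ Syl_p(G), and P ≤ S a subgroup such that N_S(P) ∈ Syl_p(N_G(P)). Then: (a) the image of N_S(P) in N_G(P)/C_G(P) is a Sylow p-subgroup of N_G(P)/C_G(P), and (b) C_S(P) ∈ Syl_p(C_G(P)); in particular |C_S(P)| ≥ |C_S(Q)| for every Q ≤ S which is G-conjugate to P. -/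
/-!
`C_G(P)` is normal in `N_G(P)`, so the Sylow subgroup `N_S(P)` of `N_G(P)` meets it in a Sylow
subgroup: `|C_G(P) : C_S(P)|` divides `|N_G(P) : N_S(P)|`, which is prime to `p`. Modulo
`C_G(P)`, every element of `N_S(P) C_G(P)` agrees with an element of the `p`-group `N_S(P)`.
Conjugate subgroups have centralizers of equal order, so for `Q = gPg⁻¹ ≤ S` the `p`-subgroup
`C_S(Q)` of `C_G(Q)` is no larger than a Sylow subgroup of `C_G(P)`, that is, than `C_S(P)`.
-/

open Subgroup

section

variable {G : Type*} [Group G] {p : ℕ}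

theorem inv_pow_mul_mul_pow_mem {C : Subgroup G} {a c : G} (ha : a ∈ normalizer (C : Set G))
    (hc : c ∈ C) : ∀ n : ℕ, (a ^ n)⁻¹ * (a * c) ^ n ∈ C
  | 0 => by simp
  | n + 1 => by
    have hconj := (mem_normalizer_iff.mp (inv_mem ha) _).mp (inv_pow_mul_mul_pow_mem ha hc n)
    convert mul_mem hconj hc using 1
    rw [pow_succ, pow_succ]
    group

theorem IsPGroup.exists_pow_prime_pow_mem_of_mem_sup {A C : Subgroup G} (hA : IsPGroup p A)
    (hAC : A ≤ normalizer (C : Set G)) {x : G} (hx : x ∈ A ⊔ C) : ∃ k : ℕ, x ^ p ^ k ∈ C := by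
  rw [← SetLike.mem_coe, coe_mul_of_left_le_normalizer_right A C hAC] at hx
  obtain ⟨a, ha, c, hc, rfl⟩ := hx
  obtain ⟨k, hk⟩ := hA ⟨a, ha⟩
  have hak : a ^ p ^ k = 1 := by simpa using congrArg Subtype.val hk
  refine ⟨k, ?_⟩
  simpa [hak] using inv_pow_mul_mul_pow_mem (hAC ha) hc (p ^ k)

/-- By the second isomorphism theorem `|K : H ⊓ K| = |H ⊔ K : H|`, a divisor of `|G : H|`. -/
theorem relIndex_dvd_index_of_normal_right [Finite G] (H K : Subgroup G) [K.Normal] :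
    H.relIndex K ∣ H.index := by
  have hcross : H.relIndex K * K.index = K.relIndex H * H.index := by
    rw [← inf_relIndex_right H K, ← inf_relIndex_left H K, relIndex_mul_index inf_le_right,
      relIndex_mul_index inf_le_left]
  have hsup : K.relIndex (H ⊔ K) * (H ⊔ K).index = K.index := relIndex_mul_index le_sup_right
  rw [relIndex_sup_right] at hsup
  rw [← hsup, mul_left_comm] at hcross
  have hpos : 0 < K.relIndex H := Nat.pos_of_ne_zero (K.subgroupOf H).index_ne_zero_of_finite
  exact Dvd.intro _ (Nat.eq_of_mul_eq_mul_left hpos hcross)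

theorem relIndex_dvd_relIndex_of_normal_subgroupOf [Finite G] (H : Subgroup G) {C N : Subgroup G}
    (hCN : C ≤ N) [(C.subgroupOf N).Normal] : H.relIndex C ∣ H.relIndex N := by
  rw [← relIndex_subgroupOf hCN]
  exact relIndex_dvd_index_of_normal_right _ _

theorem IsPGroup.card_le_pow_factorization_card [Finite G] [Fact p.Prime] {H K : Subgroup G}
    (hH : IsPGroup p H) (hHK : H ≤ K) : Nat.card H ≤ p ^ (Nat.card K).factorization p := by
  obtain ⟨k, hk⟩ := hH.exists_card_eq
  rw [hk]
  refine Nat.pow_le_pow_right (Fact.out : p.Prime).pos ?_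
  rw [← (Fact.out : p.Prime).pow_dvd_iff_le_factorization Nat.card_pos.ne', ← hk]
  exact card_dvd_of_le hHK

theorem IsPGroup.exists_sylow_eq_inf_subgroupOf [Fact p.Prime] {H : Subgroup G} (hH : IsPGroup p H)
    (K : Subgroup G) (hHK : ¬ p ∣ H.relIndex K) :
    ∃ T : Sylow p K, (T : Subgroup K) = (H ⊓ K).subgroupOf K :=
  ⟨(hH.to_inf_left.comap_subtype).toSylow (by
    show ¬ p ∣ (H ⊓ K).relIndex K
    rwa [inf_relIndex_right]), rfl⟩

theorem map_equiv_centralizer {G' : Type*} [Group G'] (e : G ≃* G') (s : Set G) :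
    (centralizer s).map e.toMonoidHom = centralizer (e '' s) := by
  refine le_antisymm (map_centralizer_le_centralizer_image s _) ?_
  rw [map_equiv_eq_comap_symm', ← map_le_iff_le_comap]
  simpa [Set.image_image] using map_centralizer_le_centralizer_image (e '' s) e.symm.toMonoidHom

theorem card_centralizer_conjBy (g : G) (P : Subgroup G) :
    Nat.card (centralizer (conjBy g P : Set G)) = Nat.card (centralizer (P : Set G)) := by
  rw [conjBy, coe_map, MulEquiv.coe_toMonoidHom, ← map_equiv_centralizer]
  exact card_map_of_injective (MulAut.conj g).injective

end

/-- Part (a) is encoded as: the join `N_S(P) ⊔ C_G(P)` is a `p`-group modulo `C_G(P)` and has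
index in `N_G(P)` coprime to `p`. -/
theorem stmt12_general {p : ℕ} (hp : p.Prime) {G : Type*} [Group G] [Finite G]
    (S : Sylow p G) (P : Subgroup G)
    (hFN : ∃ T : Sylow p ↥(Subgroup.normalizer (P : Set G)),
      (T : Subgroup ↥(Subgroup.normalizer (P : Set G)))
        = ((S : Subgroup G) ⊓ (Subgroup.normalizer (P : Set G))).subgroupOf (Subgroup.normalizer (P : Set G))) :
    (∀ x ∈ ((S : Subgroup G) ⊓ (Subgroup.normalizer (P : Set G))) ⊔ Subgroup.centralizer (P : Set G),
        ∃ k : ℕ, x ^ p ^ k ∈ Subgroup.centralizer (P : Set G))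
    ∧ Nat.Coprime
        ((((S : Subgroup G) ⊓ (Subgroup.normalizer (P : Set G))) ⊔ Subgroup.centralizer (P : Set G)).relIndex
          (Subgroup.normalizer (P : Set G))) p
    ∧ (∃ T : Sylow p ↥(Subgroup.centralizer (P : Set G)),
        (T : Subgroup ↥(Subgroup.centralizer (P : Set G)))
          = ((S : Subgroup G) ⊓ Subgroup.centralizer (P : Set G)).subgroupOf
              (Subgroup.centralizer (P : Set G)))
    ∧ (∀ g : G, conjBy g P ≤ (S : Subgroup G) →
        Nat.card ↥((S : Subgroup G) ⊓ Subgroup.centralizer ((conjBy g P : Subgroup G) : Set G))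
          ≤ Nat.card ↥((S : Subgroup G) ⊓ Subgroup.centralizer (P : Set G))) := by
  have : Fact p.Prime := ⟨hp⟩
  have hCN := centralizer_le_normalizer (P : Set G)
  have hSN : ¬ p ∣ (S : Subgroup G).relIndex (normalizer (P : Set G)) := by
    obtain ⟨T, hT⟩ := hFN
    have := T.not_dvd_index
    rwa [hT, ← relIndex, inf_relIndex_right] at this
  have hSC : ¬ p ∣ (S : Subgroup G).relIndex (centralizer (P : Set G)) :=
    fun h ↦ hSN (h.trans (relIndex_dvd_relIndex_of_normal_subgroupOf _ hCN))
  obtain ⟨TC, hTC⟩ := S.isPGroup'.exists_sylow_eq_inf_subgroupOf _ hSC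
  refine ⟨fun x hx ↦ ?_, ?_, ⟨TC, hTC⟩, fun g _ ↦ ?_⟩
  · exact S.isPGroup'.to_inf_left.exists_pow_prime_pow_mem_of_mem_sup
      (inf_le_right.trans (le_normalizer_of_normal_subgroupOf hCN)) hx
  · refine Nat.Coprime.symm ((hp.coprime_iff_not_dvd).mpr fun h ↦ hSN ?_)
    rw [← inf_relIndex_right]
    exact h.trans (relIndex_dvd_of_le_left _ le_sup_left)
  · calc Nat.card ↥((S : Subgroup G) ⊓ centralizer (conjBy g P : Set G))
        ≤ p ^ (Nat.card (centralizer (conjBy g P : Set G))).factorization p :=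
          S.isPGroup'.to_inf_left.card_le_pow_factorization_card inf_le_right
      _ = Nat.card ↥((S : Subgroup G) ⊓ centralizer (P : Set G)) := by
          rw [card_centralizer_conjBy, ← TC.card_eq_multiplicity, hTC]
          exact Nat.card_congr (subgroupOfEquivOfLe inf_le_right).toEquiv

/-- Saturation axiom (I) for fusion systems of finite groups.  If `N_S(P)` is a Sylow
`p`-subgroup of `N_G(P)`, then:
(a) the image of `N_S(P)` in `N_G(P)/C_G(P)` is a Sylow `p`-subgroup there (encoded: the
join `N_S(P) ⊔ C_G(P)` is a `p`-group modulo `C_G(P)` and has index in `N_G(P)` coprime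
to `p`); and
(b) `C_S(P)` is a Sylow `p`-subgroup of `C_G(P)`; in particular `|C_S(P)| ≥ |C_S(Q)|` for
every `G`-conjugate `Q ≤ S` of `P`. -/
theorem stmt12 {p : ℕ} (hp : p.Prime) {G : Type*} [Group G] [Finite G]
    (S : Sylow p G) (P : Subgroup G) (hP : P ≤ S)
    (hFN : ∃ T : Sylow p ↥(Subgroup.normalizer (P : Set G)),
      (T : Subgroup ↥(Subgroup.normalizer (P : Set G)))
        = ((S : Subgroup G) ⊓ (Subgroup.normalizer (P : Set G))).subgroupOf (Subgroup.normalizer (P : Set G))) :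
    (∀ x ∈ ((S : Subgroup G) ⊓ (Subgroup.normalizer (P : Set G))) ⊔ Subgroup.centralizer (P : Set G),
        ∃ k : ℕ, x ^ p ^ k ∈ Subgroup.centralizer (P : Set G))
    ∧ Nat.Coprime
        ((((S : Subgroup G) ⊓ (Subgroup.normalizer (P : Set G))) ⊔ Subgroup.centralizer (P : Set G)).relIndex
          (Subgroup.normalizer (P : Set G))) p
    ∧ (∃ T : Sylow p ↥(Subgroup.centralizer (P : Set G)),
        (T : Subgroup ↥(Subgroup.centralizer (P : Set G)))
          = ((S : Subgroup G) ⊓ Subgroup.centralizer (P : Set G)).subgroupOf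
              (Subgroup.centralizer (P : Set G)))
    ∧ (∀ g : G, conjBy g P ≤ (S : Subgroup G) →
        Nat.card ↥((S : Subgroup G) ⊓ Subgroup.centralizer ((conjBy g P : Subgroup G) : Set G))
          ≤ Nat.card ↥((S : Subgroup G) ⊓ Subgroup.centralizer (P : Set G))) :=
  stmt12_general hp S P hFN
end

section
/- Extension axiom for fusion in finite groups: Let G be a finite group, p a prime, S ∈ Syl_p(G). Let P ≤ S and g ∈ G with gPg⁻¹ ≤ S, and assume C_S(gPg⁻¹) ∈ Syl_p(C_G(gPg⁻¹)). Define N = { x ∈ N_S(P) : ∃ y ∈ N_S(gPg⁻¹) such that (gxg⁻¹)·u·(gxg⁻¹)⁻¹ = y·u·y⁻¹ for all u ∈ gPg⁻¹ }. Then there exists h ∈ G such that hNh⁻¹ ≤ S and h·u·h⁻¹ = g·u·g⁻¹ for all u ∈ P. -/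
namespace Subgroup

variable {G : Type*} [Group G]

theorem normalizer_le_normalizer_centralizer (s : Set G) :
    normalizer s ≤ normalizer (centralizer s : Set G) :=
  le_normalizer_of_normal_subgroupOf (centralizer_le_normalizer s)

theorem inv_mul_mem_centralizer_of_conj_eq {s : Set G} {a b : G}
    (h : ∀ u ∈ s, a * u * a⁻¹ = b * u * b⁻¹) : b⁻¹ * a ∈ centralizer s := by
  intro u hu
  calc u * (b⁻¹ * a) = b⁻¹ * (b * u * b⁻¹) * a := by group
    _ = b⁻¹ * (a * u * a⁻¹) * a := by rw [h u hu]
    _ = b⁻¹ * a * u := by group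

theorem relIndex_sup_right_of_le_normalizer {H K : Subgroup G} (hH : H ≤ normalizer K) :
    K.relIndex (H ⊔ K) = K.relIndex H := by
  have hHK : H ≤ H ⊔ K := le_sup_left
  have : (K.subgroupOf (H ⊔ K)).Normal :=
    (normal_subgroupOf_iff_le_normalizer le_sup_right).mpr (sup_le hH le_normalizer)
  rw [← relIndex_subgroupOf hHK, ← relIndex_sup_right (H.subgroupOf _) (K.subgroupOf _),
    ← subgroupOf_sup hHK le_sup_right, subgroupOf_self, relIndex_top_right, relIndex]

theorem relIndex_sup_left_of_le_normalizer [Finite G] {H K : Subgroup G}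
    (hH : H ≤ normalizer K) : H.relIndex (H ⊔ K) = (H ⊓ K).relIndex K := by
  have hH' := relIndex_mul_relIndex (H ⊓ K) H (H ⊔ K) inf_le_left le_sup_left
  have hK' := relIndex_mul_relIndex (H ⊓ K) K (H ⊔ K) inf_le_right le_sup_right
  rw [relIndex_sup_right_of_le_normalizer hH, ← inf_relIndex_left H K, ← hH'] at hK'
  exact Nat.eq_of_mul_eq_mul_left (Nat.pos_of_ne_zero index_ne_zero_of_finite)
    (hK'.symm.trans (mul_comm _ _))

theorem exists_mem_left_mem_right_of_mem_sup {H K : Subgroup G} (hH : H ≤ normalizer K)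
    {x : G} (hx : x ∈ H ⊔ K) : ∃ a ∈ H, ∃ c ∈ K, a * c = x := by
  rw [← SetLike.mem_coe, coe_mul_of_left_le_normalizer_right H K hH] at hx
  exact hx

end Subgroup

open Subgroup

section Sylow

variable {G : Type*} [Group G] {p : ℕ} [Fact p.Prime] [Finite G]

theorem IsPGroup.exists_conj_mem_sylow {K : Subgroup G} (hK : IsPGroup p K) (P : Sylow p G) :
    ∃ g : G, ∀ k ∈ K, g * k * g⁻¹ ∈ P := by
  obtain ⟨Q, hKQ⟩ := hK.exists_le_sylow
  obtain ⟨g, rfl⟩ := MulAction.exists_smul_eq G Q P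
  refine ⟨g, fun k hk => ?_⟩
  rw [← SetLike.mem_coe, Sylow.coe_smul]
  exact ⟨k, hKQ hk, rfl⟩

theorem exists_conj_mem_of_le_sup {A C K : Subgroup G} (hA : IsPGroup p A)
    (hAC : A ≤ normalizer C) (hidx : ¬ p ∣ (A ⊓ C).relIndex C) (hK : IsPGroup p K)
    (hKle : K ≤ A ⊔ C) : ∃ c ∈ C, ∀ k ∈ K, c * k * c⁻¹ ∈ A := by
  have hidx' : ¬ p ∣ (A.subgroupOf (A ⊔ C)).index := by
    rwa [← relIndex, relIndex_sup_left_of_le_normalizer hAC]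
  obtain ⟨m, hm⟩ := hK.comap_subtype.exists_conj_mem_sylow (hA.comap_subtype.toSylow hidx')
  obtain ⟨a, ha, c, hc, hac⟩ := exists_mem_left_mem_right_of_mem_sup hAC m.2
  refine ⟨c, hc, fun k hk => ?_⟩
  have hmk : (m : G) * k * (m : G)⁻¹ ∈ A := hm ⟨k, hKle hk⟩ hk
  rw [← hac] at hmk
  have : c * k * c⁻¹ = a⁻¹ * (a * c * k * (a * c)⁻¹) * a := by group
  exact this ▸ mul_mem (mul_mem (inv_mem ha) hmk) ha

end Sylow

theorem stmt14_general {p : ℕ} (hp : p.Prime) {G : Type*} [Group G] [Finite G]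
    (S : Sylow p G) (P : Subgroup G) (g : G)
    (hfc : ∃ T : Sylow p ↥(Subgroup.centralizer ((conjBy g P : Subgroup G) : Set G)),
      (T : Subgroup ↥(Subgroup.centralizer ((conjBy g P : Subgroup G) : Set G)))
        = ((S : Subgroup G) ⊓ Subgroup.centralizer ((conjBy g P : Subgroup G) : Set G)).subgroupOf
            (Subgroup.centralizer ((conjBy g P : Subgroup G) : Set G))) :
    ∃ h : G,
      (∀ x ∈ (S : Subgroup G) ⊓ Subgroup.normalizer (P : Set G),
        (∃ y ∈ (S : Subgroup G) ⊓ Subgroup.normalizer ((conjBy g P : Subgroup G) : Set G),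
          ∀ u ∈ conjBy g P,
            (g * x * g⁻¹) * u * (g * x * g⁻¹)⁻¹ = y * u * y⁻¹) →
        h * x * h⁻¹ ∈ (S : Subgroup G))
      ∧ ∀ u ∈ P, h * u * h⁻¹ = g * u * g⁻¹ := by
  have : Fact p.Prime := ⟨hp⟩
  set Q := conjBy g P
  set C := centralizer (Q : Set G)
  set A := (S : Subgroup G) ⊓ normalizer (Q : Set G)
  have hAC : A ≤ normalizer (C : Set G) :=
    inf_le_right.trans (normalizer_le_normalizer_centralizer _)
  have hidx : ¬ p ∣ (A ⊓ C).relIndex C := by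
    obtain ⟨T, hT⟩ := hfc
    rw [inf_assoc, inf_eq_right.mpr (centralizer_le_normalizer _), relIndex, ← hT]
    exact T.not_dvd_index' index_ne_zero_of_finite
  have hA : IsPGroup p A := S.2.to_le inf_le_left
  set K := (A ⊔ C) ⊓ conjBy g ((S : Subgroup G) ⊓ normalizer (P : Set G))
  have hK : IsPGroup p K := (S.2.to_le inf_le_left).map _ |>.to_le inf_le_right
  obtain ⟨c, hc, hcK⟩ := exists_conj_mem_of_le_sup hA hAC hidx hK inf_le_left
  refine ⟨c * g, ?_, fun u hu => ?_⟩
  · rintro x hx ⟨y, hy, hxy⟩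
    have hgx : g * x * g⁻¹ ∈ K := by
      refine ⟨?_, x, hx, rfl⟩
      rw [← mul_inv_cancel_left y (g * x * g⁻¹)]
      exact mul_mem (mem_sup_left hy) (mem_sup_right (inv_mul_mem_centralizer_of_conj_eq hxy))
    rw [show c * g * x * (c * g)⁻¹ = c * (g * x * g⁻¹) * c⁻¹ by group]
    exact (inf_le_left : A ≤ S) (hcK _ hgx)
  · calc c * g * u * (c * g)⁻¹ = c * (g * u * g⁻¹) * c⁻¹ := by group
      _ = g * u * g⁻¹ := by rw [← hc (g * u * g⁻¹) ⟨u, hu, rfl⟩, mul_inv_cancel_right]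

/-- Extension axiom for fusion in finite groups.  Let `P ≤ S ∈ Syl_p(G)`, `g ∈ G` with
`gPg⁻¹ ≤ S`, and assume `C_S(gPg⁻¹) ∈ Syl_p(C_G(gPg⁻¹))`.  Let
`N = {x ∈ N_S(P) : ∃ y ∈ N_S(gPg⁻¹), c_{gxg⁻¹} = c_y on gPg⁻¹}`.  Then there is `h ∈ G`
with `hNh⁻¹ ≤ S` and `h u h⁻¹ = g u g⁻¹` for all `u ∈ P`. -/
theorem stmt14 {p : ℕ} (hp : p.Prime) {G : Type*} [Group G] [Finite G]
    (S : Sylow p G) (P : Subgroup G) (hPS : P ≤ S) (g : G)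
    (hg : conjBy g P ≤ (S : Subgroup G))
    (hfc : ∃ T : Sylow p ↥(Subgroup.centralizer ((conjBy g P : Subgroup G) : Set G)),
      (T : Subgroup ↥(Subgroup.centralizer ((conjBy g P : Subgroup G) : Set G)))
        = ((S : Subgroup G) ⊓ Subgroup.centralizer ((conjBy g P : Subgroup G) : Set G)).subgroupOf
            (Subgroup.centralizer ((conjBy g P : Subgroup G) : Set G))) :
    ∃ h : G,
      (∀ x ∈ (S : Subgroup G) ⊓ Subgroup.normalizer (P : Set G),
        (∃ y ∈ (S : Subgroup G) ⊓ Subgroup.normalizer ((conjBy g P : Subgroup G) : Set G),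
          ∀ u ∈ conjBy g P,
            (g * x * g⁻¹) * u * (g * x * g⁻¹)⁻¹ = y * u * y⁻¹) →
        h * x * h⁻¹ ∈ (S : Subgroup G))
      ∧ ∀ u ∈ P, h * u * h⁻¹ = g * u * g⁻¹ :=
  stmt14_general hp S P g hfc
end

section
/- Let G and Γ be groups and let Θ be a function assigning to each element a ∈ G a nonempty subset Θ(a) ⊆ Γ, such that for all a, b ∈ G and every x ∈ Θ(a), Θ(ab) = x·Θ(b) (elementwise left translation). Then: (1) Θ(1) is a subgroup of Γ; (2) for each a ∈ G, Θ(a) is simultaneously a left coset and a right coset of Θ(1), so Θ(a) ⊆ N_Γ(Θ(1)); and (3) the induced map G → N_Γ(Θ(1))/Θ(1) sending a to the coset Θ(a) is a group homomorphism. -/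
/-!
Everything follows from the multiplicativity `x ∈ Θ a → y ∈ Θ b → x * y ∈ Θ (a * b)`, which is
the cocycle condition read elementwise. Applied to `Θ 1 = x • Θ 1` for `x ∈ Θ 1` it gives `1 ∈ Θ 1`,
and then `Θ 1 = x • Θ (a⁻¹)` for `x ∈ Θ a` gives `x⁻¹ ∈ Θ a⁻¹`. Hence `Θ 1` is a subgroup, and
`z ∈ Θ a ↔ z * x⁻¹ ∈ Θ 1` and `x * Θ 1 * x⁻¹ ⊆ Θ (a * 1 * a⁻¹) = Θ 1` for every `x ∈ Θ a`.
-/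

def IsTranslationCocycle {G Γ : Type*} [Mul G] [Mul Γ] (Θ : G → Set Γ) : Prop :=
  ∀ a b : G, ∀ x ∈ Θ a, Θ (a * b) = (fun y => x * y) '' Θ b

namespace IsTranslationCocycle

variable {G Γ : Type*} [Group G] [Group Γ] {Θ : G → Set Γ} {a b : G} {x y : Γ}

theorem mul_mem (h : IsTranslationCocycle Θ) (hx : x ∈ Θ a) (hy : y ∈ Θ b) :
    x * y ∈ Θ (a * b) := by
  rw [h a b x hx]
  exact Set.mem_image_of_mem _ hy

theorem eq_image_mul_left (h : IsTranslationCocycle Θ) (hx : x ∈ Θ a) :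
    Θ a = (fun y => x * y) '' Θ 1 := by
  simpa using h a 1 x hx

theorem one_mem (h : IsTranslationCocycle Θ) (hne : (Θ 1).Nonempty) : (1 : Γ) ∈ Θ 1 := by
  obtain ⟨x, hx⟩ := hne
  have hx' := hx
  rw [h.eq_image_mul_left hx] at hx'
  obtain ⟨y, hy, hxy⟩ := hx'
  rwa [← mul_eq_left.mp hxy]

theorem inv_mem (h : IsTranslationCocycle Θ) (h1 : (1 : Γ) ∈ Θ 1) (hx : x ∈ Θ a) :
    x⁻¹ ∈ Θ a⁻¹ := by
  rw [← mul_inv_cancel a, h a a⁻¹ x hx] at h1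
  obtain ⟨w, hw, hxw⟩ := h1
  rwa [inv_eq_of_mul_eq_one_right hxw]

theorem conj_mem (h : IsTranslationCocycle Θ) (h1 : (1 : Γ) ∈ Θ 1) (hx : x ∈ Θ a)
    (hy : y ∈ Θ 1) : x * y * x⁻¹ ∈ Θ 1 := by
  simpa using h.mul_mem (h.mul_mem hx hy) (h.inv_mem h1 hx)

theorem eq_image_mul_right (h : IsTranslationCocycle Θ) (h1 : (1 : Γ) ∈ Θ 1) (hx : x ∈ Θ a) :
    Θ a = (fun y => y * x) '' Θ 1 := by
  ext z
  rw [Set.image_mul_right, Set.mem_preimage]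
  constructor
  · intro hz
    simpa using h.mul_mem hz (h.inv_mem h1 hx)
  · intro hz
    simpa using h.mul_mem hz hx

def subgroup (h : IsTranslationCocycle Θ) (hne : (Θ 1).Nonempty) : Subgroup Γ where
  carrier := Θ 1
  one_mem' := h.one_mem hne
  mul_mem' hx hy := by simpa using h.mul_mem hx hy
  inv_mem' hx := by simpa using h.inv_mem (h.one_mem hne) hx

theorem mem_normalizer_subgroup (h : IsTranslationCocycle Θ) (hne : (Θ 1).Nonempty)
    (hx : x ∈ Θ a) : x ∈ Subgroup.normalizer (h.subgroup hne : Set Γ) := by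
  have h1 := h.one_mem hne
  rw [Subgroup.mem_normalizer_iff]
  intro y
  refine ⟨h.conj_mem h1 hx, fun hy => ?_⟩
  change y ∈ Θ 1
  simpa [mul_assoc] using h.conj_mem h1 (h.inv_mem h1 hx) hy

end IsTranslationCocycle

/-- Abstract properties of fusion mapping triples: if `Θ` assigns to each `a ∈ G` a nonempty
subset of `Γ` with `Θ(ab) = x·Θ(b)` for every `x ∈ Θ(a)`, then `Θ(1)` is a subgroup, each
`Θ(a)` is both a left and a right coset of `Θ(1)` contained in the normalizer of `Θ(1)`,
and `a ↦ Θ(a)` is multiplicative. -/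
theorem stmt15 {G Γ : Type*} [Group G] [Group Γ] (Θ : G → Set Γ)
    (hne : ∀ a : G, (Θ a).Nonempty)
    (hco : ∀ a b : G, ∀ x ∈ Θ a, Θ (a * b) = (fun y => x * y) '' Θ b) :
    ∃ H : Subgroup Γ, (H : Set Γ) = Θ 1
      ∧ (∀ a : G, ∀ x ∈ Θ a, Θ a = (fun y => x * y) '' Θ 1
          ∧ Θ a = (fun y => y * x) '' Θ 1 ∧ x ∈ Subgroup.normalizer (H : Set Γ))
      ∧ (∀ a b : G, ∀ x ∈ Θ a, ∀ y ∈ Θ b, x * y ∈ Θ (a * b)) := by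
  have h : IsTranslationCocycle Θ := hco
  have h1 : (1 : Γ) ∈ Θ 1 := h.one_mem (hne 1)
  exact ⟨h.subgroup (hne 1), rfl,
    fun _ _ hx => ⟨h.eq_image_mul_left hx, h.eq_image_mul_right h1 hx,
      h.mem_normalizer_subgroup (hne 1) hx⟩,
    fun _ _ _ hx _ hy => h.mul_mem hx hy⟩
end

section
/- Let G be a finite group, p a prime, S ∈ Syl_p(G), and P ≤ S. Then the number of S-conjugacy classes of subgroups P' ≤ S such that P' is G-conjugate to P and |N_S(P')| ≥ |N_S(Q)| for all Q ≤ S G-conjugate to P, is coprime to p. -/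
/-- `Q` is a fully normalized `G`-conjugate of `P` in `S`: `Q ≤ S`, `Q` is `G`-conjugate
to `P`, and `|N_S(Q)|` is maximal among `G`-conjugates of `P` contained in `S`. -/
def IsFullyNormalizedConjugate {G : Type*} [Group G] (S P Q : Subgroup G) : Prop :=
  Q ≤ S ∧ (∃ g : G, conjBy g P = Q) ∧
    ∀ R : Subgroup G, R ≤ S → (∃ g : G, conjBy g P = R) →
      Nat.card ↥(S ⊓ Subgroup.normalizer (R : Set G)) ≤ Nat.card ↥(S ⊓ Subgroup.normalizer (Q : Set G))

open MulAction Pointwise Subgroup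

theorem Nat.pow_succ_dvd_of_pow_dvd_of_ne {p k j : ℕ} (hp : p.Prime) (hdvd : p ^ k ∣ p ^ j)
    (hne : p ^ j ≠ p ^ k) : p ^ (k + 1) ∣ p ^ j := by
  have hkj := (Nat.pow_dvd_pow_iff_le_right hp.one_lt).mp hdvd
  exact pow_dvd_pow p (lt_of_le_of_ne hkj (by rintro rfl; exact hne rfl))

theorem Nat.pow_sub_dvd_and_eq_iff_of_mul_eq_pow {p a c n b : ℕ} (hp : p.Prime) (hbn : b ≤ n)
    (hac : a * c = p ^ n) (hc : c ∣ p ^ b) :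
    p ^ (n - b) ∣ a ∧ (a = p ^ (n - b) ↔ c = p ^ b) := by
  obtain ⟨e, heb, rfl⟩ := (Nat.dvd_prime_pow hp).mp hc
  obtain rfl : a = p ^ (n - e) := by
    rw [← Nat.pow_div (heb.trans hbn) hp.pos, ← hac, Nat.mul_div_cancel _ (pow_pos hp.pos e)]
  refine ⟨pow_dvd_pow p (by omega), ?_⟩
  rw [Nat.pow_right_inj hp.one_lt, Nat.pow_right_inj hp.one_lt]
  omega

theorem Nat.not_pow_sub_succ_dvd_of_mul_eq {p a c m : ℕ} (hp : p.Prime) (hm : m ≠ 0)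
    (hac : a * c = m) : ¬ p ^ (m.factorization p - c.factorization p + 1) ∣ a := by
  intro hdvd
  have hcm : c.factorization p ≤ m.factorization p :=
    (Nat.factorization_le_iff_dvd (right_ne_zero_of_mul (hac ▸ hm)) hm).mpr
      (Dvd.intro_left a hac) p
  have h := mul_dvd_mul hdvd (Nat.ordProj_dvd c p)
  rw [← pow_add, show m.factorization p - c.factorization p + 1 + c.factorization p =
    m.factorization p + 1 by omega, hac] at h
  exact Nat.pow_succ_factorization_not_dvd hm hp h

section Orbits

variable {H β : Type*} [Group H] [MulAction H β]

theorem MulAction.exists_finset_orbit_transversal [Finite (orbitRel.Quotient H β)]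
    (P : orbitRel.Quotient H β → Prop) :
    ∃ T : Finset β, (∀ b ∈ T, P ⟦b⟧) ∧ (∀ b, P ⟦b⟧ → ∃! c, c ∈ T ∧ c ∈ orbit H b) ∧
      T.card = Nat.card {ω // P ω} := by
  classical
  have : Fintype (orbitRel.Quotient H β) := Fintype.ofFinite _
  refine ⟨(Finset.univ.filter P).map ⟨Quotient.out, Quotient.out_injective⟩, ?_, ?_, ?_⟩
  · intro b hb
    obtain ⟨ω, hω, rfl⟩ := Finset.mem_map.mp hb
    simpa using (Finset.mem_filter.mp hω).2
  · intro b hb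
    refine ⟨(⟦b⟧ : orbitRel.Quotient H β).out,
      ⟨Finset.mem_map_of_mem _ (by simpa using hb), Quotient.mk_out (s := orbitRel H β) b⟩, ?_⟩
    rintro c ⟨hc, hcb⟩
    obtain ⟨ω, -, rfl⟩ := Finset.mem_map.mp hc
    exact congrArg Quotient.out (Quotient.out_eq ω ▸ Quotient.sound hcb)
  · rw [Finset.card_map, Nat.card_eq_fintype_card, Fintype.card_subtype]

theorem IsPGroup.not_dvd_card_orbits_of_card_eq {p : ℕ} [hp : Fact p.Prime] [Finite β]
    (hH : IsPGroup p H) {k : ℕ} (hdvd : ∀ b : β, p ^ k ∣ Nat.card (orbit H b))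
    (hβ : ¬ p ^ (k + 1) ∣ Nat.card β) :
    ¬ p ∣ Nat.card {ω : orbitRel.Quotient H β // Nat.card ω.orbit = p ^ k} := by
  classical
  intro hp_dvd
  have : Fintype (orbitRel.Quotient H β) := Fintype.ofFinite _
  have hsum : Nat.card β = ∑ ω : orbitRel.Quotient H β, Nat.card ω.orbit := by
    rw [Nat.card_congr (selfEquivSigmaOrbits' H β), Nat.card_sigma]
  refine hβ ?_
  rw [hsum, ← Finset.sum_filter_add_sum_filter_not _ (fun ω => Nat.card ω.orbit = p ^ k)]
  refine dvd_add ?_ (Finset.dvd_sum fun ω hω => ?_)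
  · rw [Finset.sum_congr rfl fun ω hω => (Finset.mem_filter.mp hω).2, Finset.sum_const,
      smul_eq_mul, pow_succ', ← Fintype.card_subtype, ← Nat.card_eq_fintype_card]
    exact mul_dvd_mul_right hp_dvd _
  · have hne := (Finset.mem_filter.mp hω).2
    obtain ⟨j, hj⟩ := hH.card_orbit ω.out
    rw [orbitRel.Quotient.orbit_eq_orbit_out ω Quotient.out_eq', hj] at hne ⊢
    exact Nat.pow_succ_dvd_of_pow_dvd_of_ne hp.out (hj ▸ hdvd ω.out) hne

end Orbits

section Sylow

variable {p : ℕ} [hp : Fact p.Prime] {G α : Type*} [Group G] [MulAction G α]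

theorem IsPGroup.card_dvd_ordProj_of_le [Finite G] {K N : Subgroup G} (hK : IsPGroup p K)
    (hKN : K ≤ N) : Nat.card K ∣ p ^ (Nat.card N).factorization p := by
  obtain ⟨j, hj⟩ := IsPGroup.iff_card.mp hK
  have := Nat.ordProj_dvd_ordProj_of_dvd Nat.card_pos.ne' (Subgroup.card_dvd_of_le hKN) p
  rwa [hj, Nat.ordProj_self_pow hp.out] at *

theorem MulAction.card_stabilizer_of_mem_orbit {x y : α} (h : y ∈ orbit G x) :
    Nat.card (stabilizer G y) = Nat.card (stabilizer G x) := by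
  obtain ⟨g, rfl⟩ := h
  exact Nat.card_congr (stabilizerEquivStabilizer rfl).toEquiv.symm

theorem Subgroup.card_stabilizer (H : Subgroup G) (a : α) :
    Nat.card (stabilizer H a) = Nat.card ↥(H ⊓ stabilizer G a) :=
  Nat.card_congr
    { toFun := fun h => ⟨h.1.1, h.1.2, h.2⟩
      invFun := fun g => ⟨⟨g.1, g.2.1⟩, g.2.2⟩ }

theorem Subgroup.card_orbit_mul_card_inf_stabilizer (H : Subgroup G) (a : α) :
    Nat.card (orbit H a) * Nat.card ↥(H ⊓ stabilizer G a) = Nat.card H := by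
  rw [Nat.card_coe_set_eq, ← index_stabilizer, ← H.card_stabilizer, mul_comm, card_mul_index]

theorem MulAction.orbit.stabilizer_coe {x : α} (y : orbit G x) :
    stabilizer G y = stabilizer G (y : α) := by
  ext g
  exact Subtype.ext_iff

theorem MulAction.orbit.mem_subgroup_orbit_coe_iff {H : Subgroup G} {x : α} {y z : orbit G x} :
    (z : α) ∈ orbit H (y : α) ↔ z ∈ orbit H y :=
  ⟨fun ⟨h, hh⟩ => ⟨h, Subtype.ext hh⟩, fun ⟨h, hh⟩ => ⟨h, congrArg Subtype.val hh⟩⟩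

variable (p) in
def IsSylowInStabilizer (S : Subgroup G) (y : α) : Prop :=
  Nat.card ↥(S ⊓ stabilizer G y) = p ^ (Nat.card (stabilizer G y)).factorization p

variable [Finite G]

theorem Sylow.exists_transversal_isSylowInStabilizer [IsPretransitive G α] [Nonempty α]
    (S : Sylow p G) :
    ∃ T : Finset α, (∀ y ∈ T, IsSylowInStabilizer p (S : Subgroup G) y) ∧
      (∀ y, IsSylowInStabilizer p (S : Subgroup G) y →
        ∃! z, z ∈ T ∧ z ∈ orbit (S : Subgroup G) y) ∧ ¬ p ∣ T.card := by
  obtain ⟨x⟩ := ‹Nonempty α›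
  set n := (Nat.card G).factorization p
  set b := (Nat.card (stabilizer G x)).factorization p
  have hstab (y : α) : Nat.card (stabilizer G y) = Nat.card (stabilizer G x) :=
    card_stabilizer_of_mem_orbit (exists_smul_eq G x y)
  have hcard : Nat.card α * Nat.card (stabilizer G x) = Nat.card G := by
    rw [← index_stabilizer_of_transitive G x, mul_comm, Subgroup.card_mul_index]
  have : Finite α := Nat.finite_of_card_ne_zero (left_ne_zero_of_mul (hcard ▸ Nat.card_pos.ne'))
  have hbn : b ≤ n := (Nat.factorization_le_iff_dvd Nat.card_pos.ne' Nat.card_pos.ne').mpr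
    (Dvd.intro_left _ hcard) p
  have hdvd (y : α) : Nat.card ↥((S : Subgroup G) ⊓ stabilizer G y) ∣ p ^ b := by
    have := IsPGroup.card_dvd_ordProj_of_le (K := (S : Subgroup G) ⊓ stabilizer G y)
      (S.isPGroup'.to_le inf_le_left) inf_le_right
    rwa [hstab] at this
  have hsize (y : α) := Nat.pow_sub_dvd_and_eq_iff_of_mul_eq_pow hp.out hbn
    ((S : Subgroup G).card_orbit_mul_card_inf_stabilizer y ▸ S.card_eq_multiplicity) (hdvd y)
  have hiff (y : α) :
      Nat.card (orbit (S : Subgroup G) y) = p ^ (n - b) ↔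
        IsSylowInStabilizer p (S : Subgroup G) y := by
    rw [(hsize y).2, IsSylowInStabilizer, hstab]
  obtain ⟨T, hTP, hTuniq, hTcard⟩ := exists_finset_orbit_transversal (H := (S : Subgroup G))
    (β := α) fun ω => Nat.card ω.orbit = p ^ (n - b)
  refine ⟨T, fun y hy => (hiff y).mp (hTP y hy), fun y hy => hTuniq y ((hiff y).mpr hy), ?_⟩
  rw [hTcard]
  exact S.isPGroup'.not_dvd_card_orbits_of_card_eq (fun y => (hsize y).1)
    (Nat.not_pow_sub_succ_dvd_of_mul_eq hp.out Nat.card_pos.ne' hcard)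

theorem Sylow.exists_transversal_orbit_isSylowInStabilizer (S : Sylow p G) (x : α) :
    ∃ T : Finset α, (∀ y ∈ T, y ∈ orbit G x ∧ IsSylowInStabilizer p (S : Subgroup G) y) ∧
      (∀ y ∈ orbit G x, IsSylowInStabilizer p (S : Subgroup G) y →
        ∃! z, z ∈ T ∧ z ∈ orbit (S : Subgroup G) y) ∧ ¬ p ∣ T.card := by
  have : Nonempty (orbit G x) := ⟨⟨x, mem_orbit_self x⟩⟩
  have hsyl (y : orbit G x) : IsSylowInStabilizer p (S : Subgroup G) y ↔
      IsSylowInStabilizer p (S : Subgroup G) (y : α) := by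
    rw [IsSylowInStabilizer, IsSylowInStabilizer, orbit.stabilizer_coe]
  obtain ⟨T, hT, hTuniq, hTcard⟩ := S.exists_transversal_isSylowInStabilizer (α := orbit G x)
  refine ⟨T.map (Function.Embedding.subtype _), ?_, ?_, by rwa [Finset.card_map]⟩
  · intro y hy
    obtain ⟨y, hyT, rfl⟩ := Finset.mem_map.mp hy
    exact ⟨y.2, (hsyl y).mp (hT y hyT)⟩
  · intro y hy hsy
    obtain ⟨z, ⟨hzT, hzy⟩, hz⟩ := hTuniq ⟨y, hy⟩ ((hsyl ⟨y, hy⟩).mpr hsy)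
    refine ⟨z, ⟨Finset.mem_map_of_mem _ hzT, orbit.mem_subgroup_orbit_coe_iff.mpr hzy⟩, ?_⟩
    rintro w ⟨hw, hwy⟩
    obtain ⟨w, hwT, rfl⟩ := Finset.mem_map.mp hw
    exact congrArg Subtype.val (hz w ⟨hwT, orbit.mem_subgroup_orbit_coe_iff.mp hwy⟩)

end Sylow

namespace Subgroup

variable {G : Type*} [Group G]

instance conjMulAction : MulAction G (Subgroup G) :=
  MulAction.compHom _ MulAut.conj

theorem mem_orbit_subgroup_iff_exists_conjBy {S H K : Subgroup G} :
    K ∈ orbit S H ↔ ∃ s ∈ S, conjBy s H = K :=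
  ⟨fun ⟨s, hs⟩ => ⟨s, s.2, hs⟩, fun ⟨s, hs, hsK⟩ => ⟨⟨s, hs⟩, hsK⟩⟩

theorem stabilizer_eq_normalizer (H : Subgroup G) : stabilizer G H = normalizer (H : Set G) := by
  ext g
  exact mem_normalizer_iff_map_conj_eq.symm

theorem le_of_isSylowInStabilizer {p : ℕ} [Fact p.Prime] [Finite G] {S Q : Subgroup G}
    (hQ : IsPGroup p Q) (h : IsSylowInStabilizer p S Q) : Q ≤ S := by
  rw [IsSylowInStabilizer, stabilizer_eq_normalizer] at h
  set N := normalizer (Q : Set G)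
  let SN : Sylow p N := Sylow.ofCard ((S ⊓ N).subgroupOf N) (by
    rwa [Nat.card_congr (subgroupOfEquivOfLe inf_le_right).toEquiv])
  have : (Q.subgroupOf N).Normal := normal_in_normalizer
  have hQSN := (hQ.of_equiv (subgroupOfEquivOfLe le_normalizer).symm).le_sylow_of_normal SN
  intro q hq
  exact (hQSN (show (⟨q, le_normalizer hq⟩ : N) ∈ Q.subgroupOf N from hq)).1

end Subgroup

theorem isFullyNormalizedConjugate_iff {p : ℕ} [hp : Fact p.Prime] {G : Type*} [Group G]
    [Finite G] (S : Sylow p G) {P Q : Subgroup G} (hP : IsPGroup p P)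
    (hex : ∃ R ∈ orbit G P, IsSylowInStabilizer p (S : Subgroup G) R) :
    IsFullyNormalizedConjugate S P Q ↔
      Q ∈ orbit G P ∧ IsSylowInStabilizer p (S : Subgroup G) Q := by
  set b := (Nat.card (normalizer (P : Set G))).factorization p
  have hpgroup {R : Subgroup G} (hR : R ∈ orbit G P) : IsPGroup p R := by
    obtain ⟨g, rfl⟩ := hR
    exact hP.map _
  have hcard {R : Subgroup G} (hR : R ∈ orbit G P) :
      Nat.card (normalizer (R : Set G)) = Nat.card (normalizer (P : Set G)) := by
    simpa only [stabilizer_eq_normalizer] using card_stabilizer_of_mem_orbit hR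
  have hsyl {R : Subgroup G} (hR : R ∈ orbit G P) : IsSylowInStabilizer p (S : Subgroup G) R ↔
      Nat.card ↥((S : Subgroup G) ⊓ normalizer (R : Set G)) = p ^ b := by
    rw [IsSylowInStabilizer, stabilizer_eq_normalizer, hcard hR]
  have hbound {R : Subgroup G} (hR : R ∈ orbit G P) :
      Nat.card ↥((S : Subgroup G) ⊓ normalizer (R : Set G)) ≤ p ^ b := by
    refine Nat.le_of_dvd (pow_pos hp.out.pos _) ?_
    have := IsPGroup.card_dvd_ordProj_of_le (K := (S : Subgroup G) ⊓ normalizer (R : Set G))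
      (S.isPGroup'.to_le inf_le_left) inf_le_right
    rwa [hcard hR] at this
  constructor
  · rintro ⟨-, hQP, hmax⟩
    obtain ⟨R, hRP, hRsyl⟩ := hex
    refine ⟨hQP, (hsyl hQP).mpr (le_antisymm (hbound hQP) ?_)⟩
    rw [← (hsyl hRP).mp hRsyl]
    exact hmax R (le_of_isSylowInStabilizer (hpgroup hRP) hRsyl) hRP
  · rintro ⟨hQP, hQsyl⟩
    refine ⟨le_of_isSylowInStabilizer (hpgroup hQP) hQsyl, hQP, fun R _ hRP => ?_⟩
    rw [(hsyl hQP).mp hQsyl]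
    exact hbound hRP

/-- The number of `S`-conjugacy classes of fully normalized subgroups in the `G`-conjugacy
class of `P` is coprime to `p` (encoded via a transversal `T`). -/
theorem stmt17 {p : ℕ} (hp : p.Prime) {G : Type*} [Group G] [Finite G]
    (S : Sylow p G) (P : Subgroup G) (hP : P ≤ S) :
    ∃ T : Finset (Subgroup G),
      (∀ Q ∈ T, IsFullyNormalizedConjugate (S : Subgroup G) P Q)
      ∧ (∀ Q : Subgroup G, IsFullyNormalizedConjugate (S : Subgroup G) P Q →
          ∃! R : Subgroup G, R ∈ T ∧ ∃ s ∈ (S : Subgroup G), conjBy s Q = R)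
      ∧ ¬ p ∣ T.card := by
  have : Fact p.Prime := ⟨hp⟩
  obtain ⟨T, hT, hTuniq, hTcard⟩ := S.exists_transversal_orbit_isSylowInStabilizer P
  obtain ⟨R, hR⟩ := Finset.card_pos.mp (Nat.pos_of_ne_zero fun h => hTcard (h ▸ dvd_zero p))
  have hFN (Q : Subgroup G) :=
    isFullyNormalizedConjugate_iff (Q := Q) S (S.isPGroup'.to_le hP) ⟨R, hT R hR⟩
  refine ⟨T, fun Q hQ => (hFN Q).mpr (hT Q hQ), fun Q hQ => ?_, hTcard⟩
  simp_rw [← mem_orbit_subgroup_iff_exists_conjBy]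
  exact hTuniq Q ((hFN Q).mp hQ).1 ((hFN Q).mp hQ).2
end
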